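/- Let t be the Thue-Morse sequence and let x, z, j, m be nonnegative integers with z < 2^m and n ≥ 1 an integer, and suppose ⌊n·z / 2^m⌋ = j. If s₁(·) denotes the number of 1s in the binary expansion, then s₁(n·(x·2^m + z)) = s₁(n·x + j) + s₁(n·z mod 2^m), and consequently t(n·(x·2^m + z)) = t(n·x + j) XOR t(n·z mod 2^m). -/

import Mathlib

/-- The number of 1s in the binary expansion. -/
def s₁ (i : ℕ) : ℕ := (Nat.digits 2 i).count 1

/-- The Thue-Morse sequence: number of 1s in the binary expansion, mod 2. -/
def thueMorse (i : ℕ) : ℕ := s₁ i % 2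

-- The digits of `a * b ^ m + c` are those of `c`, padded with zeros to length `m` (possible as
-- `c < b ^ m`), followed by those of `a`; the padding is invisible to `count d` since `d ≠ 0`.
theorem Nat.count_digits_mul_pow_add {b d : ℕ} (hb : 1 < b) (hd : d ≠ 0) (a c m : ℕ)
    (hc : c < b ^ m) :
    (b.digits (a * b ^ m + c)).count d = (b.digits a).count d + (b.digits c).count d := by
  rcases Nat.eq_zero_or_pos a with rfl | ha
  · simp
  have hlen : (b.digits c).length ≤ m := (Nat.digits_length_le_iff hb c).mpr hc
  have hdigits := Nat.digits_append_zeroes_append_digits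
    (k := m - (b.digits c).length) (n := c) hb ha
  rw [Nat.add_sub_cancel' hlen, add_comm c, mul_comm] at hdigits
  rw [← hdigits, List.count_append, List.count_append, List.count_replicate]
  simp [hd.symm, add_comm]

theorem s₁_mul_two_pow_add (a c m : ℕ) (hc : c < 2 ^ m) :
    s₁ (a * 2 ^ m + c) = s₁ a + s₁ c :=
  Nat.count_digits_mul_pow_add one_lt_two one_ne_zero a c m hc

theorem thueMorse_eq_of_s₁_eq_add {a b c : ℕ} (h : s₁ a = s₁ b + s₁ c) :
    thueMorse a = (thueMorse b + thueMorse c) % 2 := by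
  rw [thueMorse, thueMorse, thueMorse, h, Nat.add_mod]

theorem mul_mul_two_pow_add_eq (n x z m : ℕ) :
    n * (x * 2 ^ m + z) = (n * x + n * z / 2 ^ m) * 2 ^ m + n * z % 2 ^ m := by
  rw [add_mul, add_assoc, mul_comm (n * z / 2 ^ m), Nat.div_add_mod, mul_add, mul_assoc]

theorem thueMorse_split_general (n x z j m : ℕ)
    (hj : n * z / 2 ^ m = j) :
    s₁ (n * (x * 2 ^ m + z)) = s₁ (n * x + j) + s₁ (n * z % 2 ^ m) ∧
    thueMorse (n * (x * 2 ^ m + z)) =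
      (thueMorse (n * x + j) + thueMorse (n * z % 2 ^ m)) % 2 := by
  have hs₁ : s₁ (n * (x * 2 ^ m + z)) = s₁ (n * x + j) + s₁ (n * z % 2 ^ m) := by
    rw [mul_mul_two_pow_add_eq, hj]
    exact s₁_mul_two_pow_add _ _ _ (Nat.mod_lt _ (Nat.two_pow_pos m))
  exact ⟨hs₁, thueMorse_eq_of_s₁_eq_add hs₁⟩

theorem thueMorse_split (n x z j m : ℕ) (hn : 1 ≤ n) (hz : z < 2 ^ m)
    (hj : n * z / 2 ^ m = j) :
    s₁ (n * (x * 2 ^ m + z)) = s₁ (n * x + j) + s₁ (n * z % 2 ^ m) ∧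
    thueMorse (n * (x * 2 ^ m + z)) =
      (thueMorse (n * x + j) + thueMorse (n * z % 2 ^ m)) % 2 :=
  thueMorse_split_general n x z j m hj
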